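/- Let (V; M0,...,M4; c) be a Higmanian matrix configuration with valencies ni = c(i,i,0), fix i ∈ {3,4}, and for j ∈ {1,2,3,4} set c_j = c(2,2,j) + 2·c(2,i,j) + c(i,i,j) (the number of common neighbours, in the graph with adjacency matrix M2+Mi, of a pair of vertices in relation Mj). Then: (a) the conjunction (c_1 = c_2 and c_3 = c_4) holds if and only if c(3,3,3) = c(3,3,4) and 1/n3 + 1/n4 = 1/n1 − 1/(n1+1) (equality of rationals); (b) the conjunction (c_2 = c_3 and c_3 = c_4) holds if and only if c(3,3,3) = c(3,3,4) and n2/(n1+1) − 2·ni/n_{7−i} = 1 (equality of rationals). -/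

import Mathlib

open Matrix Finset

/-- A *Higmanian matrix configuration* on a nonempty finite set `V`:
five nonzero symmetric `{0,1}`-matrices `M 0, …, M 4` over `ℤ` summing to the all-ones
matrix, with `M 0 = I`, structure constants `c`, parabolic conditions for
`N0 = M0 + M1` and `N1 = M0 + M1 + M2`, standard ordering `n3 ≤ n4`, and triviality of
the radicals of `M 3` and `M 4`. -/
structure HigmanianConfig (V : Type*) [Fintype V] [DecidableEq V] : Type _ where
  nonempty : Nonempty V
  M : Fin 5 → Matrix V V ℤ
  c : Fin 5 → Fin 5 → Fin 5 → ℕ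
  M_ne_zero : ∀ i, M i ≠ 0
  M_symm : ∀ i, (M i)ᵀ = M i
  M_entries : ∀ i x y, M i x y = 0 ∨ M i x y = 1
  M_zero : M 0 = 1
  sum_M : M 0 + M 1 + M 2 + M 3 + M 4 = Matrix.of fun _ _ => 1
  mul_M : ∀ i j, M i * M j = ∑ k : Fin 5, (c i j k : ℤ) • M k
  N0_sq : (M 0 + M 1) * (M 0 + M 1) = ((1 + c 1 1 0 : ℕ) : ℤ) • (M 0 + M 1)
  N1_sq : (M 0 + M 1 + M 2) * (M 0 + M 1 + M 2)
      = ((1 + c 1 1 0 + c 2 2 0 : ℕ) : ℤ) • (M 0 + M 1 + M 2)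
  N1_ne_J : M 0 + M 1 + M 2 ≠ Matrix.of fun _ _ => 1
  n3_le_n4 : c 3 3 0 ≤ c 4 4 0
  radical : ∀ j ∈ ({3, 4} : Finset (Fin 5)), ∀ T : Finset (Fin 5),
    T.Nonempty → T ⊆ ({1, 2, 3, 4} : Finset (Fin 5)) →
    ¬ ((1 + ∑ t ∈ T, M t) * (1 + ∑ t ∈ T, M t)
          = (1 + ∑ t ∈ T, (c t t 0 : ℤ)) • (1 + ∑ t ∈ T, M t)
        ∧ (1 + ∑ t ∈ T, M t) * M j = (1 + ∑ t ∈ T, (c t t 0 : ℤ)) • M j)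

/-- The valency `nᵢ = c i i 0` of the `i`-th basis matrix. -/
def HigmanianConfig.n {V : Type*} [Fintype V] [DecidableEq V]
    (X : HigmanianConfig V) (i : Fin 5) : ℕ := X.c i i 0

/-!
Everything is read off the structure constants, by evaluating matrix identities at a pair of
vertices in a given relation. Since `I + M 1` and `I + M 1 + M 2` are equivalence relations,
`c l m k = 0` whenever `l, m ≤ 2 < k`; this determines `c 1 1 ·`, `c 1 2 ·` and `c 2 2 ·`.
Triviality of the radical of `M 3` gives `c 1 3 4 ≠ 0`, and cancelling it in associativity
identities shows that `(I + M 1) M i` and `M 2 M i` (`i = 3, 4`) have equal coefficients on `M 3`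
and `M 4`; in particular `c(3,3,3) - c(3,3,4) = c(4,4,3) - c(4,4,4)`. With
`n k c(i,j,k) = n j c(i,k,j)` and the row sums `∑ₗ c(i,j,l) n l = n i n j`, this expresses
`c_1`, `c_2` and, when `c(3,3,3) = c(3,3,4)`, also `c_3 = c_4` as rational functions of the
valencies, and both criteria become polynomial identities in `n 1, …, n 4`.
-/

lemma Iic_one_fin_five : Iic (1 : Fin 5) = {0, 1} := rfl

lemma Iic_two_fin_five : Iic (2 : Fin 5) = {0, 1, 2} := rfl

lemma eq_iff_eq_of_mul_sub_eq_mul_sub {R : Type*} [CommRing R] [NoZeroDivisors R]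
    {a b c d u v : R} (hu : u ≠ 0) (hv : v ≠ 0) (h : u * (a - b) = v * (c - d)) :
    a = b ↔ c = d := by
  rw [← sub_eq_zero, ← mul_right_inj' hu, mul_zero, h, mul_eq_zero, or_iff_right hv,
    sub_eq_zero]

namespace HigmanianConfig

variable {V : Type*} [Fintype V] [DecidableEq V] (X : HigmanianConfig V)

lemma M_apply_nonneg (k : Fin 5) (x y : V) : 0 ≤ X.M k x y := by
  rcases X.M_entries k x y with h | h <;> simp [h]

lemma M_apply_mul_self (k : Fin 5) (x y : V) : X.M k x y * X.M k x y = X.M k x y := by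
  rcases X.M_entries k x y with h | h <;> simp [h]

lemma M_apply_eq_zero_of_ne {k l : Fin 5} {x y : V} (hkl : l ≠ k) (hk : X.M k x y = 1) :
    X.M l x y = 0 := by
  have hsum : ∑ m, X.M m x y = 1 := by
    simpa [Fin.sum_univ_five] using congrFun (congrFun X.sum_M x) y
  rw [← Finset.add_sum_erase _ _ (mem_univ k), hk, add_eq_left] at hsum
  exact (Finset.sum_eq_zero_iff_of_nonneg fun m _ => X.M_apply_nonneg m x y).1 hsum l
    (mem_erase.2 ⟨hkl, mem_univ l⟩)

lemma M_apply_mul_M_apply (l k : Fin 5) (x y : V) :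
    X.M l x y * X.M k x y = if l = k then X.M k x y else 0 := by
  split_ifs with h
  · rw [h, M_apply_mul_self]
  · rcases X.M_entries k x y with hk | hk
    · rw [hk, mul_zero]
    · rw [X.M_apply_eq_zero_of_ne h hk, zero_mul]

lemma M_apply_diag {k : Fin 5} (hk : k ≠ 0) (x : V) : X.M k x x = 0 :=
  X.M_apply_eq_zero_of_ne hk (by simp [X.M_zero])

lemma M_apply_comm (k : Fin 5) (x y : V) : X.M k y x = X.M k x y := by
  simpa using congrFun (congrFun (X.M_symm k) x) y

lemma sum_M_apply_row (k : Fin 5) (x : V) : ∑ y, X.M k x y = X.n k := by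
  have h := congrFun (congrFun (X.mul_M k k) x) x
  simp only [Matrix.mul_apply, Matrix.sum_apply, Matrix.smul_apply, smul_eq_mul] at h
  simpa [Fin.sum_univ_five, M_apply_comm _ k _ x, X.M_apply_mul_self, X.M_zero,
    X.M_apply_diag, n] using h

lemma exists_M_apply_eq_one (k : Fin 5) : ∃ x y, X.M k x y = 1 := by
  by_contra! h
  refine X.M_ne_zero k (Matrix.ext fun x y => ?_)
  simpa [h x y] using X.M_entries k x y

-- Evaluating a matrix identity at a pair in relation `k` extracts the coefficient of `M k`.
lemma M_apply_eq_ite {k : Fin 5} {x y : V} (hk : X.M k x y = 1) (l : Fin 5) :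
    X.M l x y = if l = k then 1 else 0 := by
  split_ifs with h
  · rwa [h]
  · exact X.M_apply_eq_zero_of_ne h hk

lemma mul_M_apply_eq_c {k : Fin 5} {x y : V} (hk : X.M k x y = 1) (i j : Fin 5) :
    (X.M i * X.M j) x y = X.c i j k := by
  simp only [X.mul_M, Matrix.sum_apply, Matrix.smul_apply, smul_eq_mul, X.M_apply_eq_ite hk]
  simp

lemma mul_M_apply_mul_M_apply (i j k : Fin 5) (x y : V) :
    (X.M i * X.M j) x y * X.M k x y = X.c i j k * X.M k x y := by
  simp only [X.mul_M, Matrix.sum_apply, Matrix.smul_apply, smul_eq_mul, Finset.sum_mul,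
    mul_assoc, M_apply_mul_M_apply]
  simp

lemma n_pos (k : Fin 5) : 0 < X.n k := by
  obtain ⟨x, y, hk⟩ := X.exists_M_apply_eq_one k
  have hle : X.M k x y ≤ ∑ z, X.M k x z :=
    Finset.single_le_sum (fun z _ => X.M_apply_nonneg k x z) (mem_univ y)
  rw [X.sum_M_apply_row, hk] at hle
  exact_mod_cast hle

lemma M_mul_comm (i j : Fin 5) : X.M i * X.M j = X.M j * X.M i := by
  have hsymm : (X.M i * X.M j)ᵀ = X.M i * X.M j := by
    simp only [X.mul_M, Matrix.transpose_sum, Matrix.transpose_smul, X.M_symm]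
  rw [← hsymm, Matrix.transpose_mul, X.M_symm, X.M_symm]

lemma c_comm (i j k : Fin 5) : X.c i j k = X.c j i k := by
  obtain ⟨x, y, hk⟩ := X.exists_M_apply_eq_one k
  have h := congrFun (congrFun (X.M_mul_comm i j) x) y
  rwa [X.mul_M_apply_eq_c hk, X.mul_M_apply_eq_c hk, Nat.cast_inj] at h

lemma c_zero_left (j k : Fin 5) : X.c 0 j k = if j = k then 1 else 0 := by
  obtain ⟨x, y, hk⟩ := X.exists_M_apply_eq_one k
  have h := X.mul_M_apply_eq_c hk 0 j
  rw [X.M_zero, one_mul, X.M_apply_eq_ite hk] at h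
  split_ifs at h ⊢ <;> omega

lemma c_zero_right (i k : Fin 5) : X.c i 0 k = if i = k then 1 else 0 := by
  rw [c_comm, c_zero_left]

lemma n_zero : X.n 0 = 1 := by simp [n, c_zero_left]

lemma trace_M_mul_M_mul_M (i j k : Fin 5) :
    trace (X.M i * X.M j * X.M k) = Fintype.card V * X.n k * X.c i j k := by
  simp only [Matrix.trace, Matrix.diag, Matrix.mul_apply (M := X.M i * X.M j),
    X.M_apply_comm k, mul_M_apply_mul_M_apply, ← Finset.mul_sum, X.sum_M_apply_row]
  simp [mul_comm]

lemma n_mul_c_swap (i j k : Fin 5) : X.n k * X.c i j k = X.n j * X.c i k j := by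
  have h := X.trace_M_mul_M_mul_M i j k
  rw [mul_assoc, X.M_mul_comm j k, ← mul_assoc, X.trace_M_mul_M_mul_M, mul_assoc,
    mul_assoc] at h
  have hV : (Fintype.card V : ℤ) ≠ 0 := by
    have := X.nonempty
    exact_mod_cast Fintype.card_ne_zero
  exact_mod_cast (mul_left_cancel₀ hV h).symm

lemma n_mul_c_self_self (i k : Fin 5) : X.n k * X.c i i k = X.n i * X.c k i i := by
  rw [X.n_mul_c_swap, X.c_comm i k]

lemma c_assoc (i j k m : Fin 5) :
    ∑ l, X.c i j l * X.c l k m = ∑ l, X.c j k l * X.c i l m := by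
  obtain ⟨x, y, hm⟩ := X.exists_M_apply_eq_one m
  have hl : X.M i * X.M j * X.M k = ∑ l, (X.c i j l : ℤ) • (X.M l * X.M k) := by
    simp_rw [X.mul_M i j, Finset.sum_mul, Matrix.smul_mul]
  have hr : X.M i * (X.M j * X.M k) = ∑ l, (X.c j k l : ℤ) • (X.M i * X.M l) := by
    simp_rw [X.mul_M j k, Finset.mul_sum, Matrix.mul_smul]
  have h := congrFun (congrFun (mul_assoc (X.M i) (X.M j) (X.M k)) x) y
  rw [hl, hr] at h
  simp only [Matrix.sum_apply, Matrix.smul_apply, smul_eq_mul, X.mul_M_apply_eq_c hm] at h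
  exact_mod_cast h

lemma sum_c_mul_n (i j : Fin 5) : ∑ l, X.c i j l * X.n l = X.n i * X.n j := by
  obtain ⟨x⟩ := X.nonempty
  have h : ∑ y, (X.M i * X.M j) x y = ∑ l, (X.c i j l : ℤ) * X.n l := by
    simp only [X.mul_M, Matrix.sum_apply, Matrix.smul_apply, smul_eq_mul]
    rw [Finset.sum_comm]
    simp only [← Finset.mul_sum, X.sum_M_apply_row]
  have h' : ∑ y, (X.M i * X.M j) x y = X.n i * X.n j := by
    simp only [Matrix.mul_apply]
    rw [Finset.sum_comm]
    simp only [← Finset.mul_sum, X.sum_M_apply_row, ← Finset.sum_mul]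
  exact_mod_cast h.symm.trans h'

lemma sum_c_of_mul_self_eq_smul {S : Finset (Fin 5)} {e : ℤ}
    (h : (∑ l ∈ S, X.M l) * (∑ l ∈ S, X.M l) = e • ∑ l ∈ S, X.M l) (k : Fin 5) :
    ∑ l ∈ S, ∑ m ∈ S, (X.c l m k : ℤ) = if k ∈ S then e else 0 := by
  obtain ⟨x, y, hk⟩ := X.exists_M_apply_eq_one k
  have hxy := congrFun (congrFun h x) y
  simp only [Finset.sum_mul, Finset.mul_sum, Matrix.sum_apply, Matrix.smul_apply,
    X.mul_M_apply_eq_c hk, X.M_apply_eq_ite hk, smul_eq_mul] at hxy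
  rw [Finset.sum_comm]
  simpa [Finset.sum_ite_eq'] using hxy

lemma sum_c_Iic_one (k : Fin 5) :
    ∑ l ∈ Iic 1, ∑ m ∈ Iic 1, X.c l m k = if k ≤ 1 then 1 + X.n 1 else 0 := by
  have h := X.sum_c_of_mul_self_eq_smul (S := Iic 1) (e := 1 + X.n 1)
    (by simpa [Iic_one_fin_five, n] using X.N0_sq) k
  simp only [Finset.mem_Iic] at h
  split_ifs at h ⊢ <;> exact_mod_cast h

lemma sum_c_Iic_two (k : Fin 5) :
    ∑ l ∈ Iic 2, ∑ m ∈ Iic 2, X.c l m k = if k ≤ 2 then 1 + X.n 1 + X.n 2 else 0 := by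
  have h := X.sum_c_of_mul_self_eq_smul (S := Iic 2) (e := 1 + X.n 1 + X.n 2)
    (by simpa [Iic_two_fin_five, add_assoc, n] using X.N1_sq) k
  simp only [Finset.mem_Iic] at h
  split_ifs at h ⊢ <;> exact_mod_cast h

lemma c_one_one_one : X.c 1 1 1 + 1 = X.n 1 := by
  have h := X.sum_c_Iic_one 1
  simp [Iic_one_fin_five, c_zero_left, c_zero_right] at h
  omega

lemma c_one_one_of_one_lt {k : Fin 5} (hk : 1 < k) : X.c 1 1 k = 0 := by
  have h := X.sum_c_Iic_one k
  rw [if_neg (not_le.2 hk), Finset.sum_eq_zero_iff] at h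
  exact Finset.sum_eq_zero_iff.1 (h 1 (mem_Iic.2 le_rfl)) 1 (mem_Iic.2 le_rfl)

-- "Inner" indices `≤ 2` are the relations inside the classes of `M 0 + M 1 + M 2`.
lemma c_inner_inner_outer {l m k : Fin 5} (hl : l ≤ 2) (hm : m ≤ 2) (hk : 2 < k) :
    X.c l m k = 0 := by
  have h := X.sum_c_Iic_two k
  rw [if_neg (not_le.2 hk), Finset.sum_eq_zero_iff] at h
  exact Finset.sum_eq_zero_iff.1 (h l (mem_Iic.2 hl)) m (mem_Iic.2 hm)

lemma c_inner_outer_inner {l k m : Fin 5} (hl : l ≤ 2) (hk : 2 < k) (hm : m ≤ 2) :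
    X.c l k m = 0 := by
  have h := X.n_mul_c_swap l m k
  rw [X.c_inner_inner_outer hl hm hk, mul_zero] at h
  exact (Nat.mul_eq_zero.1 h.symm).resolve_left (X.n_pos m).ne'

lemma c_one_two (k : Fin 5) : X.c 1 2 k = if k = 2 then X.n 1 else 0 := by
  have h0 : X.c 1 2 0 = 0 := by
    have h := X.sum_c_Iic_two 0
    simp [Iic_two_fin_five, c_zero_left, c_zero_right, n] at h
    omega
  have h1 : X.c 1 2 1 = 0 := by
    have h := X.n_mul_c_swap 1 1 2
    rw [X.c_one_one_of_one_lt (by decide), mul_zero] at h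
    exact (Nat.mul_eq_zero.1 h.symm).resolve_left (X.n_pos 1).ne'
  have hout : ∀ k : Fin 5, 2 < k → X.c 1 2 k = 0 := fun k hk =>
    X.c_inner_inner_outer (by decide) (by decide) hk
  have h2 : X.c 1 2 2 = X.n 1 := by
    have h := X.sum_c_mul_n 1 2
    rw [Fin.sum_univ_five, h0, h1, hout 3 (by decide), hout 4 (by decide)] at h
    exact Nat.eq_of_mul_eq_mul_right (X.n_pos 2) (by simpa using h)
  fin_cases k <;> simp [*]

lemma c_two_two_one : X.c 2 2 1 = X.n 2 := by
  have h := X.sum_c_Iic_two 1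
  simp [Iic_two_fin_five, c_zero_left, c_zero_right, c_one_two,
    X.c_comm 2 1] at h
  have := X.c_one_one_one
  omega

lemma c_two_two_two : X.c 2 2 2 + X.n 1 + 1 = X.n 2 := by
  have h := X.sum_c_Iic_two 2
  simp [Iic_two_fin_five, c_zero_left, c_zero_right, c_one_two,
    X.c_comm 2 1, X.c_one_one_of_one_lt] at h
  omega

-- Otherwise `M 1 * M 3 = n 1 • M 3`, so `I + M 1` would lie in the radical of `M 3`.
lemma c_one_three_four_ne_zero : X.c 1 3 4 ≠ 0 := by
  intro h34
  have hin : ∀ m : Fin 5, m ≤ 2 → X.c 1 3 m = 0 := fun m hm =>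
    X.c_inner_outer_inner (by decide) (by decide) hm
  have h33 : X.c 1 3 3 = X.n 1 := by
    have h := X.sum_c_mul_n 1 3
    rw [Fin.sum_univ_five, hin 0 (by decide), hin 1 (by decide), hin 2 (by decide), h34] at h
    exact Nat.eq_of_mul_eq_mul_right (X.n_pos 3) (by simpa using h)
  refine X.radical 3 (by decide) {1} (singleton_nonempty 1) (by decide) ⟨?_, ?_⟩
  · simpa [X.M_zero, n] using X.N0_sq
  · simp [add_mul, X.mul_M, Fin.sum_univ_five, hin 0 (by decide), hin 1 (by decide),
      hin 2 (by decide), h34, h33, add_smul, n]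

variable {i j : Fin 5}

lemma sum_univ_eq_of_outer (hij : (i = 3 ∧ j = 4) ∨ (i = 4 ∧ j = 3))
    {R : Type*} [AddCommMonoid R] (f : Fin 5 → R) :
    ∑ l, f l = f 0 + f 1 + f 2 + f i + f j := by
  rcases hij with ⟨rfl, rfl⟩ | ⟨rfl, rfl⟩ <;> simp only [Fin.sum_univ_five]
  abel

lemma sum_c_inner_outer_mul {l : Fin 5} (hij : (i = 3 ∧ j = 4) ∨ (i = 4 ∧ j = 3))
    (hl : l ≤ 2) (f : Fin 5 → ℕ) :
    ∑ m, X.c l i m * f m = X.c l i i * f i + X.c l i j * f j := by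
  have hin : ∀ m : Fin 5, m ≤ 2 → X.c l i m = 0 := fun m hm =>
    X.c_inner_outer_inner hl (by omega) hm
  simp [sum_univ_eq_of_outer hij, hin]

lemma c_one_outer_ne_zero (hij : (i = 3 ∧ j = 4) ∨ (i = 4 ∧ j = 3)) :
    X.c 1 i j ≠ 0 := by
  rcases hij with ⟨rfl, rfl⟩ | ⟨rfl, rfl⟩
  · exact X.c_one_three_four_ne_zero
  · intro h
    have h' := X.n_mul_c_swap 1 4 3
    rw [h, mul_zero] at h'
    exact X.c_one_three_four_ne_zero
      ((Nat.mul_eq_zero.1 h'.symm).resolve_left (X.n_pos 4).ne')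

lemma c_one_outer_add_c_one_outer (hij : (i = 3 ∧ j = 4) ∨ (i = 4 ∧ j = 3)) :
    X.c 1 i i + X.c 1 j j + 1 = X.n 1 := by
  have h := X.c_assoc 1 1 i j
  rw [X.sum_c_inner_outer_mul hij (by decide), sum_univ_eq_of_outer hij,
    X.c_one_one_of_one_lt (show (1 : Fin 5) < 2 by decide),
    X.c_one_one_of_one_lt (show 1 < i by omega),
    X.c_one_one_of_one_lt (show 1 < j by omega), c_zero_left, if_neg (show i ≠ j by omega)] at h
  have h111 : X.c 1 1 1 = X.c 1 i i + X.c 1 j j :=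
    Nat.eq_of_mul_eq_mul_right (Nat.pos_of_ne_zero (X.c_one_outer_ne_zero hij)) (by linarith)
  linarith [X.c_one_one_one]

lemma c_one_outer_outer_eq_succ (hij : (i = 3 ∧ j = 4) ∨ (i = 4 ∧ j = 3)) :
    X.c 1 i j = X.c 1 i i + 1 := by
  have hji : (j = 3 ∧ i = 4) ∨ (j = 4 ∧ i = 3) := by omega
  have h := X.sum_c_mul_n 1 j
  rw [X.sum_c_inner_outer_mul hji (by decide), mul_comm (X.c 1 j i),
    ← X.n_mul_c_swap 1 i j] at h
  have hsum : X.c 1 i j + X.c 1 j j = X.n 1 :=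
    Nat.eq_of_mul_eq_mul_right (X.n_pos j) (by linarith)
  linarith [X.c_one_outer_add_c_one_outer hij]

lemma c_one_outer_mul_add (hij : (i = 3 ∧ j = 4) ∨ (i = 4 ∧ j = 3)) :
    X.c 1 i i * (X.n i + X.n j) + X.n j = X.n 1 * X.n i := by
  have h := X.sum_c_mul_n 1 i
  rw [X.sum_c_inner_outer_mul hij (by decide), X.c_one_outer_outer_eq_succ hij] at h
  linarith

lemma c_two_outer_outer_eq (hij : (i = 3 ∧ j = 4) ∨ (i = 4 ∧ j = 3)) :
    X.c 2 i j = X.c 2 i i := by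
  have h := X.c_assoc 1 2 i j
  simp only [c_one_two, ite_mul, zero_mul, Finset.sum_ite_eq', mem_univ, if_true] at h
  rw [X.sum_c_inner_outer_mul hij (by decide), X.c_one_outer_outer_eq_succ hij,
    ← X.c_one_outer_add_c_one_outer hij] at h
  have h' : (X.c 1 i i + 1) * X.c 2 i j = (X.c 1 i i + 1) * X.c 2 i i := by linarith
  exact Nat.eq_of_mul_eq_mul_left (Nat.succ_pos _) h'

lemma c_two_outer_mul (hij : (i = 3 ∧ j = 4) ∨ (i = 4 ∧ j = 3)) :
    X.c 2 i i * (X.n i + X.n j) = X.n 2 * X.n i := by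
  have h := X.sum_c_mul_n 2 i
  rw [X.sum_c_inner_outer_mul hij (by decide), X.c_two_outer_outer_eq hij] at h
  linarith

lemma c_outer_outer_two_mul (hij : (i = 3 ∧ j = 4) ∨ (i = 4 ∧ j = 3)) :
    X.c i i 2 * (X.n i + X.n j) = X.n i * X.n i := by
  have h := X.n_mul_c_self_self i 2
  refine Nat.eq_of_mul_eq_mul_left (X.n_pos 2) ?_
  calc X.n 2 * (X.c i i 2 * (X.n i + X.n j))
      = X.n i * (X.c 2 i i * (X.n i + X.n j)) := by rw [← mul_assoc, h, mul_assoc]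
    _ = X.n 2 * (X.n i * X.n i) := by rw [X.c_two_outer_mul hij]; ring

lemma sum_c_outer_outer_mul_n (hij : (i = 3 ∧ j = 4) ∨ (i = 4 ∧ j = 3)) :
    X.n i + X.c i i 1 * X.n 1 + X.c i i 2 * X.n 2 + X.c i i i * X.n i + X.c i i j * X.n j
      = X.n i * X.n i := by
  rw [← X.sum_c_mul_n, sum_univ_eq_of_outer hij, n_zero, n, mul_one]

lemma c_two_three_eq_c_two_four (l : Fin 5) : X.c 2 l 3 = X.c 2 l 4 := by
  rcases (show l ≤ 2 ∨ l = 3 ∨ l = 4 by omega) with hl | rfl | rfl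
  · rw [X.c_inner_inner_outer (by decide) hl (by decide),
      X.c_inner_inner_outer (by decide) hl (by decide)]
  · exact (X.c_two_outer_outer_eq (Or.inl ⟨rfl, rfl⟩)).symm
  · exact X.c_two_outer_outer_eq (Or.inr ⟨rfl, rfl⟩)

lemma c_three_add_c_four (k : Fin 5) :
    X.c k 3 3 + X.c k 4 3 = X.c k 3 4 + X.c k 4 4 := by
  have key : ∀ m, ∑ l, X.c k 3 l * X.c l 2 m = X.c 2 3 3 * (X.c k 3 m + X.c k 4 m) := by
    intro m
    simp_rw [X.c_assoc, X.c_comm 3 2]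
    rw [X.sum_c_inner_outer_mul (Or.inl ⟨rfl, rfl⟩) (by decide),
      X.c_two_outer_outer_eq (Or.inl ⟨rfl, rfl⟩), mul_add]
  have h := (key 3).symm.trans ((Finset.sum_congr rfl fun l _ => ?_).trans (key 4))
  · have hpos : 0 < X.c 2 3 3 := pos_of_mul_pos_left
      ((X.c_two_outer_mul (Or.inl ⟨rfl, rfl⟩)).symm ▸ Nat.mul_pos (X.n_pos 2) (X.n_pos 3))
      (Nat.zero_le _)
    exact Nat.eq_of_mul_eq_mul_left hpos h
  · rw [X.c_comm l, X.c_comm l, X.c_two_three_eq_c_two_four]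

lemma c_three_three_three_add_c_four_four_four : X.c 3 3 3 + X.c 4 4 4 = X.c 3 3 4 + X.c 4 4 3 := by
  have h3 := X.c_three_add_c_four 3
  have h4 := X.c_three_add_c_four 4
  rw [X.c_comm 3 4 3, X.c_comm 3 4 4] at h3
  omega

lemma c_outer_outer_three_eq_four_iff
    (hij : (i = 3 ∧ j = 4) ∨ (i = 4 ∧ j = 3)) :
    X.c i i 3 = X.c i i 4 ↔ X.c 3 3 3 = X.c 3 3 4 := by
  rcases hij with ⟨rfl, rfl⟩ | ⟨rfl, rfl⟩
  · rfl
  · have := X.c_three_three_three_add_c_four_four_four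
    omega

/-- The paper's `c_k`: the number of common neighbours, in the graph `M 2 + M i`, of two vertices
in relation `k`. -/
def commonNeighbours (i k : Fin 5) : ℕ := X.c 2 2 k + 2 * X.c 2 i k + X.c i i k

lemma commonNeighbours_one (hij : (i = 3 ∧ j = 4) ∨ (i = 4 ∧ j = 3)) :
    X.commonNeighbours i 1 = X.n 2 + X.c i i 1 := by
  rw [commonNeighbours, X.c_two_two_one,
    X.c_inner_outer_inner (k := i) (by decide) (by omega) (by decide)]
  ring

lemma commonNeighbours_two (hij : (i = 3 ∧ j = 4) ∨ (i = 4 ∧ j = 3)) :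
    X.commonNeighbours i 2 + X.n 1 + 1 = X.n 2 + X.c i i 2 := by
  rw [commonNeighbours, ← X.c_two_two_two,
    X.c_inner_outer_inner (k := i) (by decide) (by omega) (by decide)]
  ring

lemma commonNeighbours_outer {k : Fin 5} (hij : (i = 3 ∧ j = 4) ∨ (i = 4 ∧ j = 3))
    (hk : 2 < k) : X.commonNeighbours i k = 2 * X.c 2 i i + X.c i i k := by
  have h2ik : X.c 2 i k = X.c 2 i i := by
    rcases (show k = i ∨ k = j by omega) with rfl | rfl
    · rfl
    · exact X.c_two_outer_outer_eq hij
  rw [commonNeighbours, X.c_inner_inner_outer (by decide) (by decide) hk, h2ik, zero_add]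

lemma commonNeighbours_three_eq_four_iff
    (hij : (i = 3 ∧ j = 4) ∨ (i = 4 ∧ j = 3)) :
    X.commonNeighbours i 3 = X.commonNeighbours i 4 ↔ X.c 3 3 3 = X.c 3 3 4 := by
  rw [X.commonNeighbours_outer hij (by decide), X.commonNeighbours_outer hij (by decide),
    Nat.add_left_cancel_iff, X.c_outer_outer_three_eq_four_iff hij]

lemma commonNeighbours_one_eq_two_iff (hij : (i = 3 ∧ j = 4) ∨ (i = 4 ∧ j = 3)) :
    X.commonNeighbours i 1 = X.commonNeighbours i 2 ↔
      1 / (X.n 3 : ℚ) + 1 / (X.n 4 : ℚ) = 1 / (X.n 1 : ℚ) - 1 / ((X.n 1 : ℚ) + 1) := by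
  have e1 : (X.commonNeighbours i 1 : ℚ) = X.n 2 + X.c i i 1 := by
    exact_mod_cast X.commonNeighbours_one hij
  have e2 : (X.commonNeighbours i 2 : ℚ) + X.n 1 + 1 = X.n 2 + X.c i i 2 := by
    exact_mod_cast X.commonNeighbours_two hij
  have e3 : (X.n 1 : ℚ) * X.c i i 1 = X.n i * X.c 1 i i := by
    exact_mod_cast X.n_mul_c_self_self i 1
  have e4 : (X.c 1 i i : ℚ) * (X.n i + X.n j) + X.n j = X.n 1 * X.n i := by
    exact_mod_cast X.c_one_outer_mul_add hij
  have e5 : (X.c i i 2 : ℚ) * (X.n i + X.n j) = X.n i * X.n i := by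
    exact_mod_cast X.c_outer_outer_two_mul hij
  have hsym : (X.n i + X.n j : ℚ) = X.n 3 + X.n 4 ∧ (X.n i * X.n j : ℚ) = X.n 3 * X.n 4 := by
    rcases hij with ⟨rfl, rfl⟩ | ⟨rfl, rfl⟩ <;> constructor <;> ring
  have h1 : (0 : ℚ) < X.n 1 := by exact_mod_cast X.n_pos 1
  have h3 : (0 : ℚ) < X.n 3 := by exact_mod_cast X.n_pos 3
  have h4 : (0 : ℚ) < X.n 4 := by exact_mod_cast X.n_pos 4
  rw [← Nat.cast_inj (R := ℚ)]
  refine eq_iff_eq_of_mul_sub_eq_mul_sub (u := X.n 1 * (X.n 3 + X.n 4))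
    (v := X.n 1 * (X.n 1 + 1) * X.n 3 * X.n 4) (by positivity) (by positivity) ?_
  have hv : (X.n 1 * (X.n 1 + 1) * X.n 3 * X.n 4 : ℚ)
        * (1 / X.n 3 + 1 / X.n 4 - (1 / X.n 1 - 1 / (X.n 1 + 1)))
      = X.n 1 * (X.n 1 + 1) * (X.n 3 + X.n 4) - X.n 3 * X.n 4 := by
    field_simp
    ring
  rw [hv, ← hsym.1, ← hsym.2]
  linear_combination (X.n 1 * (X.n i + X.n j) : ℚ) * e1 - (X.n 1 * (X.n i + X.n j) : ℚ) * e2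
    + (X.n i + X.n j : ℚ) * e3 + (X.n i : ℚ) * e4 - (X.n 1 : ℚ) * e5

lemma commonNeighbours_two_eq_three_iff (hij : (i = 3 ∧ j = 4) ∨ (i = 4 ∧ j = 3))
    (h : X.c 3 3 3 = X.c 3 3 4) :
    X.commonNeighbours i 2 = X.commonNeighbours i 3 ↔
      (X.n 2 : ℚ) / ((X.n 1 : ℚ) + 1) - 2 * (X.n i : ℚ) / (X.n j : ℚ) = 1 := by
  have hc : X.c i i 3 = X.c i i i ∧ X.c i i j = X.c i i i := by
    have := (X.c_outer_outer_three_eq_four_iff hij).2 h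
    rcases hij with ⟨rfl, rfl⟩ | ⟨rfl, rfl⟩ <;> omega
  have e2 : (X.commonNeighbours i 2 : ℚ) + X.n 1 + 1 = X.n 2 + X.c i i 2 := by
    exact_mod_cast X.commonNeighbours_two hij
  have e3 : (X.commonNeighbours i 3 : ℚ) = 2 * X.c 2 i i + X.c i i i := by
    exact_mod_cast (X.commonNeighbours_outer hij (by decide)).trans (by rw [hc.1])
  have e4 : (X.n 1 : ℚ) * X.c i i 1 = X.n i * X.c 1 i i := by
    exact_mod_cast X.n_mul_c_self_self i 1
  have e5 : (X.c 1 i i : ℚ) * (X.n i + X.n j) + X.n j = X.n 1 * X.n i := by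
    exact_mod_cast X.c_one_outer_mul_add hij
  have e6 : (X.c i i 2 : ℚ) * (X.n i + X.n j) = X.n i * X.n i := by
    exact_mod_cast X.c_outer_outer_two_mul hij
  have e7 : (X.c 2 i i : ℚ) * (X.n i + X.n j) = X.n 2 * X.n i := by
    exact_mod_cast X.c_two_outer_mul hij
  have e8 : (X.n i : ℚ) + X.c i i 1 * X.n 1 + X.c i i 2 * X.n 2 + X.c i i i * (X.n i + X.n j)
      = X.n i * X.n i := by
    rw [mul_add, ← add_assoc]
    exact_mod_cast hc.2 ▸ X.sum_c_outer_outer_mul_n hij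
  have h1 : (0 : ℚ) < X.n 1 := by exact_mod_cast X.n_pos 1
  have hi : (0 : ℚ) < X.n i := by exact_mod_cast X.n_pos i
  have hj : (0 : ℚ) < X.n j := by exact_mod_cast X.n_pos j
  rw [← Nat.cast_inj (R := ℚ)]
  refine eq_iff_eq_of_mul_sub_eq_mul_sub (u := (X.n i + X.n j) ^ 2)
    (v := (X.n 1 + 1) * X.n j ^ 2) (by positivity) (by positivity) ?_
  have hv : ((X.n 1 + 1) * X.n j ^ 2 : ℚ) * (X.n 2 / (X.n 1 + 1) - 2 * X.n i / X.n j - 1)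
      = X.n j * (X.n 2 * X.n j - (X.n 1 + 1) * (X.n j + 2 * X.n i)) := by
    field_simp
    ring
  rw [hv]
  linear_combination ((X.n i + X.n j) ^ 2 : ℚ) * e2 - ((X.n i + X.n j) ^ 2 : ℚ) * e3
    + (X.n i + X.n j : ℚ) * e4 + (X.n i : ℚ) * e5 + (X.n i + X.n j + X.n 2 : ℚ) * e6
    - 2 * (X.n i + X.n j : ℚ) * e7 - (X.n i + X.n j : ℚ) * e8

end HigmanianConfig

/-- for `i ∈ {3,4}` and `c_j = c(2,2,j) + 2c(2,i,j) + c(i,i,j)`: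
(a) `c_1 = c_2 ∧ c_3 = c_4` iff `c(3,3,3) = c(3,3,4)` and Eq. (1);
(b) `c_2 = c_3 ∧ c_3 = c_4` iff `c(3,3,3) = c(3,3,4)` and Eq. (2). -/
theorem higmanian_common_neighbours_criterion {V : Type*} [Fintype V] [DecidableEq V]
    (X : HigmanianConfig V) (i j : Fin 5)
    (hij : (i = 3 ∧ j = 4) ∨ (i = 4 ∧ j = 3))
    (cc : Fin 5 → ℕ)
    (hcc : ∀ k : Fin 5, cc k = X.c 2 2 k + 2 * X.c 2 i k + X.c i i k) :
    ((cc 1 = cc 2 ∧ cc 3 = cc 4) ↔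
      (X.c 3 3 3 = X.c 3 3 4 ∧
        1 / (X.n 3 : ℚ) + 1 / (X.n 4 : ℚ)
          = 1 / (X.n 1 : ℚ) - 1 / ((X.n 1 : ℚ) + 1))) ∧
    ((cc 2 = cc 3 ∧ cc 3 = cc 4) ↔
      (X.c 3 3 3 = X.c 3 3 4 ∧
        (X.n 2 : ℚ) / ((X.n 1 : ℚ) + 1) - 2 * (X.n i : ℚ) / (X.n j : ℚ) = 1)) := by
  obtain rfl : cc = X.commonNeighbours i := funext hcc
  have h34 := X.commonNeighbours_three_eq_four_iff hij
  refine ⟨(and_congr (X.commonNeighbours_one_eq_two_iff hij) h34).trans and_comm, ?_⟩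
  constructor
  · rintro ⟨h23, h34'⟩
    have h := h34.1 h34'
    exact ⟨h, (X.commonNeighbours_two_eq_three_iff hij h).1 h23⟩
  · rintro ⟨h, h23⟩
    exact ⟨(X.commonNeighbours_two_eq_three_iff hij h).2 h23, h34.2 h⟩
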